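/- (Artin–Rees lemma via the diagram of initial exponents.) Let A₁,…,A_q ∈ ℝ⟦x₁,…,xₙ⟧ᵖ and let M ⊆ ℝ⟦x⟧ᵖ be the submodule they generate. Let (α_i,j_i), i = 1,…,t, denote the vertices of the diagram of initial exponents 𝒩(M), and set λ := max_i |α_i|. Then for all l ∈ ℕ: M ∩ 𝔪^{l+λ}·ℝ⟦x⟧ᵖ = 𝔪^l·(M ∩ 𝔪^{λ}·ℝ⟦x⟧ᵖ), where 𝔪 = (x₁,…,xₙ) is the maximal ideal of ℝ⟦x⟧. -/

import Mathlib

open Classical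

/-- Index set `ℕⁿ × {1,…,p}` for coefficients of elements of `A⟦x₁,…,xₙ⟧ᵖ`. -/
abbrev Idx (n p : ℕ) := (Fin n →₀ ℕ) × Fin p

/-- Total degree `|α|` of a multiindex. -/
def degF {n : ℕ} (α : Fin n →₀ ℕ) : ℕ := ∑ i, α i

/-- Lexicographic order on multiindices. -/
def lexLT {n : ℕ} (α β : Fin n →₀ ℕ) : Prop :=
  ∃ i : Fin n, (∀ j, j < i → α j = β j) ∧ α i < β i

/-- The total order on `ℕⁿ × {1,…,p}` comparing `(|α|, j, α)` lexicographically. -/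
def idxLT {n p : ℕ} (a b : Idx n p) : Prop :=
  degF a.1 < degF b.1 ∨
    (degF a.1 = degF b.1 ∧ ((a.2 : ℕ) < (b.2 : ℕ) ∨ (a.2 = b.2 ∧ lexLT a.1 b.1)))

def idxLE {n p : ℕ} (a b : Idx n p) : Prop := idxLT a b ∨ a = b

/-- Support of `F ∈ A⟦x⟧ᵖ`. -/
def suppV {n p : ℕ} {A : Type} [Semiring A] (F : Fin p → MvPowerSeries (Fin n) A) :
    Set (Idx n p) :=
  {d | MvPowerSeries.coeff d.1 (F d.2) ≠ 0}

/-- `d` is the initial exponent `exp F` of `F`. -/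
def IsExpOf {n p : ℕ} {A : Type} [Semiring A] (F : Fin p → MvPowerSeries (Fin n) A)
    (d : Idx n p) : Prop :=
  d ∈ suppV F ∧ ∀ d' ∈ suppV F, idxLE d d'

/-- `S + ℕⁿ`, for `S ⊆ ℕⁿ × {1,…,p}`. -/
def setShift {n p : ℕ} (S : Set (Idx n p)) : Set (Idx n p) :=
  {d | ∃ s ∈ S, ∃ β : Fin n →₀ ℕ, d = (s.1 + β, s.2)}

/-- The diagram of initial exponents `𝒩(M) = {exp F : F ∈ M ∖ {0}}` of a submodule `M`
of `A⟦x⟧ᵖ`. -/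
def diagramOf {n p : ℕ} {A : Type} [CommRing A]
    (M : Submodule (MvPowerSeries (Fin n) A) (Fin p → MvPowerSeries (Fin n) A)) :
    Set (Idx n p) :=
  {d | ∃ F ∈ M, F ≠ 0 ∧ IsExpOf F d}

/-- `d` is a vertex of the diagram `𝒩`: `(𝒩 ∖ {d}) + ℕⁿ ≠ 𝒩`. -/
def IsVertex {n p : ℕ} (𝒩 : Set (Idx n p)) (d : Idx n p) : Prop :=
  setShift (𝒩 \ {d}) ≠ 𝒩

/-- `(α_i, j_i) + ℕⁿ`. -/
def DeltaFull {n p q : ℕ} (e : Fin q → Idx n p) (i : Fin q) : Set (Idx n p) :=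
  {d | d.2 = (e i).2 ∧ ∃ β : Fin n →₀ ℕ, d.1 = (e i).1 + β}

/-- The sets `Δ_i` of Hironaka's division: `Δ_i = ((α_i,j_i) + ℕⁿ) ∖ (Δ_1 ∪ ⋯ ∪ Δ_{i−1})`. -/
def Delta {n p q : ℕ} (e : Fin q → Idx n p) (i : Fin q) : Set (Idx n p) :=
  DeltaFull e i \ ⋃ (k : Fin q) (hk : k < i), Delta e k
termination_by i.val
decreasing_by exact hk

/-- The complementary region `Δ = ℕⁿ×{1,…,p} ∖ (Δ_1 ∪ ⋯ ∪ Δ_q)`. -/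
def DeltaC {n p q : ℕ} (e : Fin q → Idx n p) : Set (Idx n p) :=
  (⋃ i : Fin q, Delta e i)ᶜ

/-!
The vertices `(α_i, j_i)` of `𝒩(M)` are initial exponents of elements `G_i ∈ M`, and every
initial exponent of an element of `M` lies in some `(α_i, j_i) + ℕⁿ` (a standard basis). So an
`F ∈ M` can be reduced by subtracting terms `c x^β G_i`, each step strictly raising the initial
exponent. If `ord F ≥ l + λ`, then every such term lies in `𝔪^l (M ∩ 𝔪^λ)`, since
`|β| ≥ l + λ - |α_i|` and `ord G_i ≥ |α_i|`. As only finitely many exponents have degree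
`< N`, finitely many steps give `F ∈ 𝔪^l (M ∩ 𝔪^λ) + 𝔪^N ℝ⟦x⟧ᵖ` for every `N`, and by Krull's
intersection theorem (`ℝ⟦x⟧` is a Noetherian local ring) submodules of `ℝ⟦x⟧ᵖ` are closed in
the `𝔪`-adic topology.
-/

section IdxOrder

variable {n p : ℕ}

lemma degF_add (α β : Fin n →₀ ℕ) : degF (α + β) = degF α + degF β := by
  simp [degF, Finset.sum_add_distrib]

lemma degF_eq_degree (α : Fin n →₀ ℕ) : degF α = α.degree :=
  (Finsupp.degree_eq_sum α).symm

lemma lexLT_iff (α β : Fin n →₀ ℕ) : lexLT α β ↔ toLex α < toLex β := Iff.rfl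

def idxKey (a : Idx n p) : ℕ ×ₗ ℕ ×ₗ Lex (Fin n →₀ ℕ) :=
  toLex (degF a.1, toLex ((a.2 : ℕ), toLex a.1))

lemma idxKey_injective : Function.Injective (idxKey (n := n) (p := p)) := by
  intro a b h
  simp only [idxKey, toLex_inj, Prod.mk.injEq] at h
  exact Prod.ext h.2.2 (Fin.ext h.2.1)

lemma idxLT_iff_idxKey_lt {a b : Idx n p} : idxLT a b ↔ idxKey a < idxKey b := by
  simp only [idxLT, idxKey, Prod.Lex.toLex_lt_toLex, lexLT_iff, Fin.val_inj]

lemma idxLE_iff_idxKey_le {a b : Idx n p} : idxLE a b ↔ idxKey a ≤ idxKey b := by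
  rw [idxLE, idxLT_iff_idxKey_lt, le_iff_lt_or_eq, idxKey_injective.eq_iff]

lemma idxLT_irrefl (a : Idx n p) : ¬ idxLT a a := by
  rw [idxLT_iff_idxKey_lt]; exact lt_irrefl _

lemma idxLT_trans {a b c : Idx n p} (hab : idxLT a b) (hbc : idxLT b c) : idxLT a c := by
  rw [idxLT_iff_idxKey_lt] at *; exact hab.trans hbc

lemma idxLE.degF_le {a b : Idx n p} (h : idxLE a b) : degF a.1 ≤ degF b.1 := by
  rcases h with (h | ⟨h, -⟩) | rfl
  exacts [h.le, h.le, le_rfl]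

lemma idxLT_add {a b : Idx n p} (β : Fin n →₀ ℕ) (h : idxLT a b) :
    idxLT (a.1 + β, a.2) (b.1 + β, b.2) := by
  simp only [idxLT, degF_add, lexLT_iff, toLex_add, add_lt_add_iff_right, add_left_inj] at h ⊢
  exact h

lemma idxLE_add {a b : Idx n p} (β : Fin n →₀ ℕ) (h : idxLE a b) :
    idxLE (a.1 + β, a.2) (b.1 + β, b.2) :=
  h.imp (idxLT_add β) (by rintro rfl; rfl)

end IdxOrder

namespace MvPowerSeries

variable {σ R : Type*} [CommSemiring R]

lemma span_range_X_le_ker_constantCoeff :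
    Ideal.span (Set.range X) ≤ RingHom.ker (constantCoeff (σ := σ) (R := R)) := by
  rw [Ideal.span_le]
  rintro _ ⟨i, rfl⟩
  exact constantCoeff_X i

lemma span_range_X_ne_top [Nontrivial R] :
    Ideal.span (Set.range (X : σ → MvPowerSeries σ R)) ≠ ⊤ :=
  (Ideal.ne_top_iff_one _).mpr fun h => one_ne_zero (α := R) (by
    simpa using span_range_X_le_ker_constantCoeff h)

lemma one_le_order_of_mem_span_range_X {f : MvPowerSeries σ R}
    (hf : f ∈ Ideal.span (Set.range X)) : 1 ≤ f.order :=
  one_le_order_iff_constCoeff_eq_zero.mpr (span_range_X_le_ker_constantCoeff hf)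

lemma le_order_of_mem_span_range_X_pow {f : MvPowerSeries σ R} {m : ℕ}
    (hf : f ∈ Ideal.span (Set.range X) ^ m) : (m : ℕ∞) ≤ f.order := by
  induction m generalizing f with
  | zero => simp
  | succ m ih =>
    rw [pow_succ'] at hf
    refine Submodule.mul_induction_on hf (fun a ha b hb => ?_) (fun a b ha hb => ?_)
    · calc ((m + 1 : ℕ) : ℕ∞) = 1 + m := by push_cast; ring
        _ ≤ a.order + b.order := add_le_add (one_le_order_of_mem_span_range_X ha) (ih hb)
        _ ≤ (a * b).order := le_order_mul
    · exact le_trans (le_min ha hb) min_order_le_add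

lemma exists_eq_sum_X_mul [Fintype σ] {f : MvPowerSeries σ R} {m : ℕ}
    (hf : ∀ d : σ →₀ ℕ, d.degree ≤ m → coeff d f = 0) :
    ∃ g : σ → MvPowerSeries σ R,
      f = ∑ i, X i * g i ∧ ∀ i (d : σ →₀ ℕ), d.degree < m → coeff d (g i) = 0 := by
  rcases isEmpty_or_nonempty σ with hσ | hσ
  · refine ⟨0, ext fun d => ?_, by simp⟩
    simpa [Subsingleton.elim d 0] using hf 0 (by simp)
  have : ∀ d : σ →₀ ℕ, ∃ i, d ≠ 0 → d i ≠ 0 := fun d => by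
    by_cases hd : d = 0
    · exact ⟨Classical.arbitrary σ, fun h => (h hd).elim⟩
    · obtain ⟨i, hi⟩ := Finsupp.support_nonempty_iff.mpr hd
      exact ⟨i, fun _ => Finsupp.mem_support_iff.mp hi⟩
  choose pick hpick using this
  -- the monomial `x^d` of `f` is assigned to `X (pick d) * g (pick d)`
  let g : σ → MvPowerSeries σ R := fun i d =>
    if pick (d + Finsupp.single i 1) = i then coeff (d + Finsupp.single i 1) f else 0
  have hg : ∀ i d, coeff d (g i) = if pick (d + Finsupp.single i 1) = i
      then coeff (d + Finsupp.single i 1) f else 0 := fun _ _ => rfl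
  have hcoeff : ∀ i d, coeff d (X i * g i) =
      if Finsupp.single i 1 ≤ d ∧ pick d = i then coeff d f else 0 := fun i d => by
    rw [X_def, coeff_monomial_mul]
    by_cases hle : Finsupp.single i 1 ≤ d
    · simp [hle, hg, tsub_add_cancel_of_le hle]
    · simp [hle]
  refine ⟨g, ext fun d => ?_, fun i d hd => ?_⟩
  · rw [map_sum]
    simp only [hcoeff]
    by_cases hd : d = 0
    · simp [hd, hf 0 (by simp)]
    · rw [Finset.sum_eq_single (pick d) (fun i _ hi => if_neg fun h => hi h.2.symm) (by simp),
        if_pos ⟨Finsupp.single_le_iff.mpr (Nat.one_le_iff_ne_zero.mpr (hpick d hd)), rfl⟩]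
  · rw [hg, ite_eq_right_iff]
    exact fun _ => hf _ (by simpa using hd)

theorem mem_span_range_X_pow_iff [Fintype σ] {f : MvPowerSeries σ R} {m : ℕ} :
    f ∈ Ideal.span (Set.range X) ^ m ↔
      ∀ d : σ →₀ ℕ, d.degree < m → coeff d f = 0 := by
  refine ⟨fun hf d hd => coeff_of_lt_order ((Nat.cast_lt.mpr hd).trans_le
    (le_order_of_mem_span_range_X_pow hf)), fun hf => ?_⟩
  induction m generalizing f with
  | zero => simp
  | succ m ih =>
    obtain ⟨g, rfl, hg⟩ := exists_eq_sum_X_mul fun d hd => hf d (Nat.lt_succ_of_le hd)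
    rw [pow_succ']
    exact Ideal.sum_mem _ fun i _ =>
      Ideal.mul_mem_mul (Ideal.subset_span ⟨i, rfl⟩) (ih (hg i))

end MvPowerSeries

lemma mem_ideal_smul_top_pi_iff {R ι : Type*} [CommSemiring R] [Fintype ι] (I : Ideal R)
    {F : ι → R} : F ∈ I • (⊤ : Submodule R (ι → R)) ↔ ∀ j, F j ∈ I := by
  refine ⟨fun hF j => ?_, fun hF => ?_⟩
  · have hle : I • (⊤ : Submodule R (ι → R)) ≤ Submodule.pi Set.univ fun _ => I :=
      Submodule.smul_le.mpr fun r hr G _ j _ => I.mul_mem_right (G j) hr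
    exact hle hF j (Set.mem_univ j)
  · rw [pi_eq_sum_univ F]
    exact Submodule.sum_mem _ fun j _ => Submodule.smul_mem_smul (hF j) Submodule.mem_top

lemma mem_of_forall_mem_sup_pow_smul_top {R M : Type*} [CommRing R] [IsNoetherianRing R]
    [IsLocalRing R] [AddCommGroup M] [Module R M] [Module.Finite R M] {I : Ideal R} (hI : I ≠ ⊤)
    {P : Submodule R M} {x : M} (hx : ∀ N : ℕ, x ∈ P ⊔ I ^ N • ⊤) : x ∈ P := by
  rw [← Submodule.Quotient.mk_eq_zero]
  refine (IsHausdorff.of_isLocalRing I (M ⧸ P) hI).haus _ fun N => SModEq.zero.mpr ?_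
  have hN := Submodule.mem_map_of_mem (f := P.mkQ) (hx N)
  rw [Submodule.map_sup, Submodule.map_smul'', Submodule.mkQ_map_self, bot_sup_eq] at hN
  exact Submodule.smul_mono le_rfl le_top hN

section PowerSeriesModule

open MvPowerSeries

variable {k : Type} [Field k] {n p : ℕ}

local notation "𝔪" => Ideal.span (Set.range (X : Fin n → MvPowerSeries (Fin n) k))

local notation "⊤ᵖ" => (⊤ : Submodule (MvPowerSeries (Fin n) k) (Fin p → MvPowerSeries (Fin n) k))

lemma suppV_nonempty {F : Fin p → MvPowerSeries (Fin n) k} (hF : F ≠ 0) :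
    (suppV F).Nonempty := by
  obtain ⟨j, hj⟩ := Function.ne_iff.mp hF
  obtain ⟨α, hα⟩ := (ne_zero_iff_exists_coeff_ne_zero _).mp hj
  exact ⟨(α, j), hα⟩

lemma suppV_sub_subset (F G : Fin p → MvPowerSeries (Fin n) k) :
    suppV (F - G) ⊆ suppV F ∪ suppV G := by
  intro x hx
  by_contra h
  simp only [suppV, Set.mem_union, Set.mem_ofPred_eq, not_or, not_not] at h hx
  simp [h.1, h.2] at hx

lemma finite_setOf_degF_lt (N : ℕ) : {d : Idx n p | degF d.1 < N}.Finite :=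
  ((Finsupp.finite_of_degree_le N).prod Set.finite_univ).subset fun d hd =>
    ⟨by simpa [← degF_eq_degree] using hd.le, Set.mem_univ _⟩

lemma exists_isExpOf {F : Fin p → MvPowerSeries (Fin n) k} (hF : F ≠ 0) :
    ∃ d, IsExpOf F d := by
  obtain ⟨d, hd, hmin⟩ := (InvImage.wf idxKey wellFounded_lt).has_min _ (suppV_nonempty hF)
  exact ⟨d, hd, fun x hx => idxLE_iff_idxKey_le.mpr (not_lt.mp (hmin x hx))⟩

lemma IsExpOf.ne_zero {F : Fin p → MvPowerSeries (Fin n) k} {d : Idx n p} (hF : IsExpOf F d) :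
    F ≠ 0 := by
  rintro rfl
  exact hF.1 (map_zero _)

lemma mem_pow_smul_top_iff {F : Fin p → MvPowerSeries (Fin n) k} {m : ℕ} :
    F ∈ 𝔪 ^ m • ⊤ᵖ ↔ ∀ x ∈ suppV F, m ≤ degF x.1 := by
  simp only [mem_ideal_smul_top_pi_iff, mem_span_range_X_pow_iff, suppV, Set.mem_ofPred_eq,
    degF_eq_degree, Prod.forall]
  exact ⟨fun h α j hα => not_lt.mp fun hlt => hα (h j α hlt),
    fun h j α hlt => not_not.mp fun hα => (h α j hα).not_gt hlt⟩

lemma IsExpOf.mem_pow_smul_top {F : Fin p → MvPowerSeries (Fin n) k} {d : Idx n p}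
    (hF : IsExpOf F d) : F ∈ 𝔪 ^ degF d.1 • ⊤ᵖ :=
  mem_pow_smul_top_iff.mpr fun x hx => (hF.2 x hx).degF_le

lemma coeff_add_monomial_smul (F : Fin p → MvPowerSeries (Fin n) k) (α β : Fin n →₀ ℕ)
    (c : k) (j : Fin p) : coeff (α + β) ((monomial β c • F) j) = c * coeff α (F j) := by
  rw [Pi.smul_apply, smul_eq_mul, coeff_monomial_mul, if_pos le_add_self, add_tsub_cancel_right]

lemma IsExpOf.le_of_mem_suppV_monomial_smul {F : Fin p → MvPowerSeries (Fin n) k} {d x : Idx n p}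
    (hF : IsExpOf F d) {β : Fin n →₀ ℕ} {c : k} (hx : x ∈ suppV (monomial β c • F)) :
    idxLE (d.1 + β, d.2) x := by
  have hx' : coeff x.1 (monomial β c * F x.2) ≠ 0 := hx
  rw [coeff_monomial_mul] at hx'
  split_ifs at hx' with hle
  · simpa [tsub_add_cancel_of_le hle] using
      idxLE_add β (hF.2 (x.1 - β, x.2) (right_ne_zero_of_mul hx'))
  · exact absurd rfl hx'

lemma IsExpOf.monomial_smul {F : Fin p → MvPowerSeries (Fin n) k} {d : Idx n p}
    (hF : IsExpOf F d) (β : Fin n →₀ ℕ) {c : k} (hc : c ≠ 0) :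
    IsExpOf (monomial β c • F) (d.1 + β, d.2) := by
  refine ⟨?_, fun x hx => hF.le_of_mem_suppV_monomial_smul hx⟩
  show coeff _ _ ≠ 0
  rw [coeff_add_monomial_smul]
  exact mul_ne_zero hc hF.1

variable {M : Submodule (MvPowerSeries (Fin n) k) (Fin p → MvPowerSeries (Fin n) k)}

lemma setShift_diagramOf : setShift (diagramOf M) = diagramOf M := by
  ext d
  refine ⟨?_, fun hd => ⟨d, hd, 0, by simp⟩⟩
  rintro ⟨s, ⟨F, hFM, -, hFs⟩, β, rfl⟩
  have hexp := hFs.monomial_smul β one_ne_zero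
  exact ⟨_, M.smul_mem _ hFM, hexp.ne_zero, hexp⟩

lemma IsVertex.mem_diagramOf {d : Idx n p} (hd : IsVertex (diagramOf M) d) : d ∈ diagramOf M := by
  by_contra h
  exact hd (by rw [Set.sdiff_singleton_eq_self h, setShift_diagramOf])

lemma exists_isVertex_le {d : Idx n p} (hd : d ∈ diagramOf M) :
    ∃ v, IsVertex (diagramOf M) v ∧ v.2 = d.2 ∧ v.1 ≤ d.1 := by
  obtain ⟨α, ⟨hα, hαd⟩, hmin⟩ :=
    wellFounded_lt.has_min {α | (α, d.2) ∈ diagramOf M ∧ α ≤ d.1} ⟨d.1, hd, le_rfl⟩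
  refine ⟨(α, d.2), fun hv => ?_, rfl, hαd⟩
  obtain ⟨s, ⟨hsM, hsα⟩, β, hsβ⟩ :
      (α, d.2) ∈ setShift (diagramOf M \ {(α, d.2)}) := by
    rw [hv]; exact hα
  simp only [Prod.ext_iff] at hsβ
  have hs1 : s.1 ≤ α := hsβ.1 ▸ le_self_add
  have hs : s = (s.1, d.2) := Prod.ext rfl hsβ.2.symm
  refine hmin s.1 ⟨hs ▸ hsM, hs1.trans hαd⟩ (hs1.lt_of_ne fun h => hsα ?_)
  rw [hs, h]; rfl

variable {t : ℕ} {e : Fin t → Idx n p} {G : Fin t → Fin p → MvPowerSeries (Fin n) k}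

structure IsStandardBasis
    (M : Submodule (MvPowerSeries (Fin n) k) (Fin p → MvPowerSeries (Fin n) k))
    (e : Fin t → Idx n p) (G : Fin t → Fin p → MvPowerSeries (Fin n) k) : Prop where
  mem : ∀ i, G i ∈ M
  isExpOf : ∀ i, IsExpOf (G i) (e i)
  diagramOf_subset : diagramOf M ⊆ setShift (Set.range e)

lemma exists_isStandardBasis (he : ∀ d, IsVertex (diagramOf M) d ↔ ∃ i, e i = d) :
    ∃ G, IsStandardBasis M e G := by
  have : ∀ i, ∃ G ∈ M, IsExpOf G (e i) := fun i => by
    obtain ⟨G, hG, -, hexp⟩ := ((he (e i)).mpr ⟨i, rfl⟩).mem_diagramOf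
    exact ⟨G, hG, hexp⟩
  choose G hGM hGe using this
  refine ⟨G, ⟨hGM, hGe, fun d hd => ?_⟩⟩
  obtain ⟨v, hv, hv2, hv1⟩ := exists_isVertex_le hd
  obtain ⟨i, rfl⟩ := (he v).mp hv
  exact ⟨e i, ⟨i, rfl⟩, d.1 - (e i).1, Prod.ext (add_tsub_cancel_of_le hv1).symm hv2.symm⟩

lemma IsStandardBasis.exists_sub_monomial_smul (hS : IsStandardBasis M e G)
    {F : Fin p → MvPowerSeries (Fin n) k} (hF : F ∈ M) {d : Idx n p} (hd : IsExpOf F d) :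
    ∃ (i : Fin t) (β : Fin n →₀ ℕ) (c : k), d = ((e i).1 + β, (e i).2) ∧
      ∀ x ∈ suppV (F - monomial β c • G i), idxLT d x := by
  obtain ⟨_, ⟨i, rfl⟩, β, rfl⟩ := hS.diagramOf_subset ⟨F, hF, hd.ne_zero, hd⟩
  refine ⟨i, β, coeff ((e i).1 + β) (F (e i).2) / coeff (e i).1 (G i (e i).2), rfl,
    fun x hx => ?_⟩
  have hne : ((e i).1 + β, (e i).2) ≠ x := by
    rintro rfl
    apply hx
    show coeff _ ((F - _) _) = 0
    rw [Pi.sub_apply, map_sub, coeff_add_monomial_smul,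
      div_mul_cancel₀ _ (hS.isExpOf i).1, sub_self]
  rcases suppV_sub_subset _ _ hx with hx | hx
  · exact (hd.2 x hx).resolve_right hne
  · exact ((hS.isExpOf i).le_of_mem_suppV_monomial_smul hx).resolve_right hne

lemma mem_of_forall_isExpOf_degF_lt {N : ℕ}
    {Q : Submodule (MvPowerSeries (Fin n) k) (Fin p → MvPowerSeries (Fin n) k)}
    (hQ : 𝔪 ^ N • ⊤ᵖ ≤ Q)
    {F : Fin p → MvPowerSeries (Fin n) k} (hF : ∀ d, IsExpOf F d → degF d.1 < N → F ∈ Q) :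
    F ∈ Q := by
  rcases eq_or_ne F 0 with rfl | hF0
  · exact Q.zero_mem
  obtain ⟨d, hd⟩ := exists_isExpOf hF0
  by_cases hdN : degF d.1 < N
  · exact hF d hd hdN
  · exact hQ (Submodule.smul_mono_left (Ideal.pow_le_pow_right (not_lt.mp hdN))
      hd.mem_pow_smul_top)

theorem IsStandardBasis.mem_sup_pow_smul_top (hS : IsStandardBasis M e G) {m : ℕ}
    {P : Submodule (MvPowerSeries (Fin n) k) (Fin p → MvPowerSeries (Fin n) k)}
    (hP : ∀ i (β : Fin n →₀ ℕ) (c : k), m ≤ degF (e i).1 + degF β → monomial β c • G i ∈ P)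
    (N : ℕ) {F : Fin p → MvPowerSeries (Fin n) k} (hFM : F ∈ M) (hFm : F ∈ 𝔪 ^ m • ⊤ᵖ) :
    F ∈ P ⊔ 𝔪 ^ N • ⊤ᵖ := by
  have : IsStrictOrder (Idx n p) (fun a b => idxLT b a) :=
    { irrefl := idxLT_irrefl, trans := fun _ _ _ hab hbc => idxLT_trans hbc hab }
  -- each reduction step strictly increases the initial exponent, within a finite set
  have hwf := (finite_setOf_degF_lt (n := n) (p := p) N).wellFoundedOn (r := fun a b => idxLT b a)
  have hreduce : ∀ d, degF d.1 < N → m ≤ degF d.1 → ∀ F ∈ M, IsExpOf F d →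
      F ∈ P ⊔ 𝔪 ^ N • ⊤ᵖ := by
    intro d hdN
    refine hwf.induction hdN
      (P := fun d => m ≤ degF d.1 → ∀ F ∈ M, IsExpOf F d → F ∈ P ⊔ 𝔪 ^ N • ⊤ᵖ)
      fun y _ ih hym F hFM hy => ?_
    obtain ⟨i, β, c, rfl, hlt⟩ := hS.exists_sub_monomial_smul hFM hy
    rw [← sub_add_cancel F (monomial β c • G i)]
    refine Submodule.add_mem _ ?_ (Submodule.mem_sup_left (hP i β c (degF_add _ β ▸ hym)))
    refine mem_of_forall_isExpOf_degF_lt le_sup_right fun z hz hzN => ?_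
    have hyz := hlt z hz.1
    exact ih z hzN hyz (hym.trans (idxLE.degF_le (Or.inl hyz))) _
      (M.sub_mem hFM (M.smul_mem _ (hS.mem i))) hz
  exact mem_of_forall_isExpOf_degF_lt le_sup_right fun d hd hdN =>
    hreduce d hdN (mem_pow_smul_top_iff.mp hFm d hd.1) F hFM hd

lemma monomial_smul_mem_pow_smul_inf {G : Fin p → MvPowerSeries (Fin n) k} (hGM : G ∈ M)
    {a l lam : ℕ} (hGa : G ∈ 𝔪 ^ a • ⊤ᵖ) (ha : a ≤ lam) {β : Fin n →₀ ℕ}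
    (hβ : l + lam ≤ a + degF β) (c : k) :
    monomial β c • G ∈ 𝔪 ^ l • (M ⊓ 𝔪 ^ lam • ⊤ᵖ) := by
  have hmon : monomial β c ∈ 𝔪 ^ l * 𝔪 ^ (lam - a) := by
    rw [← pow_add, mem_span_range_X_pow_iff]
    intro d hd
    rw [coeff_monomial, if_neg]
    rintro rfl
    rw [degF_eq_degree] at hβ
    omega
  have hG : 𝔪 ^ (lam - a) • Submodule.span _ {G} ≤ M ⊓ 𝔪 ^ lam • ⊤ := by
    refine le_inf (Submodule.smul_le_right.trans
      ((Submodule.span_singleton_le_iff_mem _ _).mpr hGM)) ?_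
    calc 𝔪 ^ (lam - a) • Submodule.span _ {G} ≤ 𝔪 ^ (lam - a) • 𝔪 ^ a • ⊤ :=
          Submodule.smul_mono le_rfl ((Submodule.span_singleton_le_iff_mem _ _).mpr hGa)
      _ = 𝔪 ^ lam • ⊤ := by rw [← Submodule.mul_smul, ← pow_add, Nat.sub_add_cancel ha]
  have := Submodule.smul_mem_smul hmon (Submodule.mem_span_singleton_self G)
  rw [Submodule.mul_smul] at this
  exact Submodule.smul_mono le_rfl hG this

end PowerSeriesModule

theorem stmt7_general {n p q t : ℕ} (Acols : Fin q → (Fin p → MvPowerSeries (Fin n) ℝ))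
    (e : Fin t → Idx n p)
    (hevert : ∀ d : Idx n p,
      IsVertex (diagramOf (Submodule.span (MvPowerSeries (Fin n) ℝ) (Set.range Acols))) d ↔
        ∃ i, e i = d)
    (lam : ℕ) (hlam : lam = Finset.univ.sup fun i => degF (e i).1) :
    ∀ l : ℕ,
      Submodule.span (MvPowerSeries (Fin n) ℝ) (Set.range Acols) ⊓
        ((Ideal.span (Set.range (MvPowerSeries.X : Fin n → MvPowerSeries (Fin n) ℝ)))
            ^ (l + lam) •
          (⊤ : Submodule (MvPowerSeries (Fin n) ℝ) (Fin p → MvPowerSeries (Fin n) ℝ))) =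
      (Ideal.span (Set.range (MvPowerSeries.X : Fin n → MvPowerSeries (Fin n) ℝ))) ^ l •
        (Submodule.span (MvPowerSeries (Fin n) ℝ) (Set.range Acols) ⊓
          ((Ideal.span (Set.range (MvPowerSeries.X : Fin n → MvPowerSeries (Fin n) ℝ))) ^ lam •
            (⊤ : Submodule (MvPowerSeries (Fin n) ℝ)
              (Fin p → MvPowerSeries (Fin n) ℝ)))) := by
  intro l
  obtain ⟨G, hS⟩ := exists_isStandardBasis hevert
  have hdeg : ∀ i, degF (e i).1 ≤ lam := fun i =>
    hlam ▸ Finset.le_sup (f := fun i => degF (e i).1) (Finset.mem_univ i)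
  apply le_antisymm
  · rintro F ⟨hFM, hFm⟩
    refine mem_of_forall_mem_sup_pow_smul_top MvPowerSeries.span_range_X_ne_top fun N =>
      hS.mem_sup_pow_smul_top (fun i β c hβ => ?_) N hFM hFm
    exact monomial_smul_mem_pow_smul_inf (hS.mem i) (hS.isExpOf i).mem_pow_smul_top (hdeg i) hβ c
  · refine le_inf ((Submodule.smul_mono le_rfl inf_le_left).trans Submodule.smul_le_right) ?_
    calc _ ≤ _ := Submodule.smul_mono le_rfl inf_le_right
      _ = _ := by rw [← Submodule.mul_smul, ← pow_add]

/-- **Artin–Rees lemma via the diagram of initial exponents.** -/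
theorem stmt7 {n p q t : ℕ} (Acols : Fin q → (Fin p → MvPowerSeries (Fin n) ℝ))
    (e : Fin t → Idx n p) (heinj : Function.Injective e)
    (hevert : ∀ d : Idx n p,
      IsVertex (diagramOf (Submodule.span (MvPowerSeries (Fin n) ℝ) (Set.range Acols))) d ↔
        ∃ i, e i = d)
    (lam : ℕ) (hlam : lam = Finset.univ.sup fun i => degF (e i).1) :
    ∀ l : ℕ,
      Submodule.span (MvPowerSeries (Fin n) ℝ) (Set.range Acols) ⊓
        ((Ideal.span (Set.range (MvPowerSeries.X : Fin n → MvPowerSeries (Fin n) ℝ)))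
            ^ (l + lam) •
          (⊤ : Submodule (MvPowerSeries (Fin n) ℝ) (Fin p → MvPowerSeries (Fin n) ℝ))) =
      (Ideal.span (Set.range (MvPowerSeries.X : Fin n → MvPowerSeries (Fin n) ℝ))) ^ l •
        (Submodule.span (MvPowerSeries (Fin n) ℝ) (Set.range Acols) ⊓
          ((Ideal.span (Set.range (MvPowerSeries.X : Fin n → MvPowerSeries (Fin n) ℝ))) ^ lam •
            (⊤ : Submodule (MvPowerSeries (Fin n) ℝ)
              (Fin p → MvPowerSeries (Fin n) ℝ)))) :=
  stmt7_general Acols e hevert lam hlam
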